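/- Let K be a number field, let f = (X − a)² − b ∈ K[X] be a monic quadratic polynomial which is post-critically infinite (the orbit {f^n(a) : n ≥ 1} is infinite), and let α be an element of a fixed algebraic closure K̄ of K. Then the compositum K_∞(f,α) of the splitting fields over K(α) of all the polynomials f^n(X) − α, n ≥ 1, is an infinite extension of K(α). -/

import Mathlib

open Polynomial Function Set

/-!
If the extension were finite, all iterated preimages of `α` under `φ z = (z - a) ^ 2 - b` would
lie in one number field. Clearing the denominators of `a`, `b`, `α` clears those of every
iterated preimage, and their conjugates stay bounded, so by Northcott there are only finitely
many of them. A surjective map permutes a finite backward orbit, so over an algebraically closed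
field every point of that orbit has a single preimage and is the critical value `-b`. Then `α = -b`
and its only preimage `a` equals `-b`, so `a` is fixed by `f` and the post-critical orbit is `{a}`.
-/

namespace Function

variable {α β : Type*}

def backwardOrbit (g : α → α) (a : α) : Set α := {x | ∃ n, 1 ≤ n ∧ g^[n] x = a}

variable {g : α → α} {a : α}

theorem preimage_insert_backwardOrbit (g : α → α) (a : α) :
    g ⁻¹' insert a (backwardOrbit g a) = backwardOrbit g a := by
  ext x
  constructor
  · rintro (hx | ⟨n, -, hn⟩)
    · exact ⟨1, le_rfl, hx⟩
    · exact ⟨n + 1, by omega, by rwa [iterate_succ_apply]⟩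
  · rintro ⟨_ | _ | n, hn, hx⟩
    · omega
    · exact Or.inl hx
    · exact Or.inr ⟨n + 1, by omega, by rwa [iterate_succ_apply] at hx⟩

theorem backwardOrbit_subset {P : Set α} (ha : a ∈ P) (hP : g ⁻¹' P ⊆ P) :
    backwardOrbit g a ⊆ P := by
  suffices ∀ n x, g^[n] x = a → x ∈ P from fun x ⟨n, _, hx⟩ => this n x hx
  intro n
  induction n with
  | zero => rintro x rfl; exact ha
  | succ n ih => exact fun x hx => hP (ih (g x) (by rwa [iterate_succ_apply] at hx))

theorem preimage_backwardOrbit {g' : β → β} {ι : β → α} (hι : Injective ι) (h : Semiconj ι g' g)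
    (b : β) : ι ⁻¹' backwardOrbit g (ι b) = backwardOrbit g' b := by
  ext y
  simp only [backwardOrbit, mem_preimage, mem_ofPred_eq, ← (h.iterate_right _).eq, hι.eq_iff]

theorem self_mem_backwardOrbit (hg : Surjective g) (hfin : (backwardOrbit g a).Finite) :
    a ∈ backwardOrbit g a := by
  have himage : g '' backwardOrbit g a = insert a (backwardOrbit g a) := by
    conv_lhs => rw [← preimage_insert_backwardOrbit, image_preimage_eq _ hg]
  by_contra ha
  have := ncard_image_le (f := g) hfin
  rw [himage, ncard_insert_of_notMem ha hfin] at this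
  omega

theorem injOn_backwardOrbit (hg : Surjective g) (hfin : (backwardOrbit g a).Finite) :
    InjOn g (backwardOrbit g a) := by
  have hpre : g ⁻¹' backwardOrbit g a = backwardOrbit g a := by
    simpa only [insert_eq_of_mem (self_mem_backwardOrbit hg hfin)] using
      preimage_insert_backwardOrbit g a
  have hmaps : MapsTo g (backwardOrbit g a) (backwardOrbit g a) := fun x hx => by
    rwa [← hpre] at hx
  have hsurj : SurjOn g (backwardOrbit g a) (backwardOrbit g a) := by
    intro y hy
    obtain ⟨x, rfl⟩ := hg y
    exact ⟨x, by rwa [← hpre], rfl⟩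
  exact ((hfin.surjOn_iff_bijOn_of_mapsTo hmaps).mp hsurj).injOn

end Function

theorem eq_neg_of_backwardOrbit_sq_sub_finite {F : Type*} [Field F] [IsAlgClosed F]
    [NeZero (2 : F)] {A B a : F} (hfin : (backwardOrbit (fun z => (z - A) ^ 2 - B) a).Finite) :
    B = -A := by
  set Φ : F → F := fun z => (z - A) ^ 2 - B
  have hroot (w : F) : ∃ s, s ^ 2 = w + B := IsAlgClosed.exists_pow_nat_eq _ two_pos
  have hsurj : Surjective Φ := fun w => by
    obtain ⟨s, hs⟩ := hroot w
    exact ⟨A + s, by simp only [Φ, add_sub_cancel_left, hs, add_sub_cancel_right]⟩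
  have ha := self_mem_backwardOrbit hsurj hfin
  have hinj := injOn_backwardOrbit hsurj hfin
  have hpre {x : F} (hx : Φ x ∈ backwardOrbit Φ a) : x ∈ backwardOrbit Φ a := by
    rw [← preimage_insert_backwardOrbit]
    exact mem_insert_of_mem _ hx
  -- A point of a finite backward orbit has a single preimage, so it is the critical value.
  have hcrit : ∀ w ∈ backwardOrbit Φ a, w = -B := by
    intro w hw
    obtain ⟨s, hs⟩ := hroot w
    have hplus : Φ (A + s) = w := by simp only [Φ]; linear_combination hs
    have hminus : Φ (A - s) = w := by simp only [Φ]; linear_combination hs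
    have hs0 : s = 0 := by
      have := hinj (hpre (hplus ▸ hw)) (hpre (hminus ▸ hw)) (hplus.trans hminus.symm)
      have h2s : (2 : F) * s = 0 := by linear_combination this
      exact (mul_eq_zero.mp h2s).resolve_left two_ne_zero
    subst hs0
    linear_combination -hs
  have hΦA : Φ A = a := by simp only [Φ]; linear_combination -(hcrit a ha)
  have hA : A ∈ backwardOrbit Φ a := hpre (hΦA ▸ ha)
  linear_combination hcrit A hA

theorem isIntegral_smul_of_sq_sub {R S : Type*} [CommRing R] [CommRing S] [Algebra R S] {d : R}
    {A B x : S} (hA : IsIntegral R (d • A)) (hB : IsIntegral R (d • B))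
    (hx : IsIntegral R (d • ((x - A) ^ 2 - B))) : IsIntegral R (d • x) := by
  have hsq : (d • (x - A)) ^ 2 = d • (d • ((x - A) ^ 2 - B)) + d • (d • B) := by
    simp only [Algebra.smul_def]; ring
  have hxA : IsIntegral R (d • (x - A)) := by
    refine IsIntegral.of_pow two_pos ?_
    rw [hsq]
    exact (hx.smul d).add (hB.smul d)
  simpa only [smul_sub, sub_add_cancel] using hxA.add hA

theorem norm_le_of_norm_sq_sub_le {𝕜 : Type*} [NormedDivisionRing 𝕜] {A B z : 𝕜} {M : ℝ}
    (hM : 2 * ‖A‖ + 2 * ‖B‖ + 2 ≤ M) (h : ‖(z - A) ^ 2 - B‖ ≤ M) : ‖z‖ ≤ M := by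
  have hsq : ‖z - A‖ ^ 2 ≤ M + ‖B‖ := by
    rw [← norm_pow]
    calc ‖(z - A) ^ 2‖ = ‖(z - A) ^ 2 - B + B‖ := by rw [sub_add_cancel]
      _ ≤ M + ‖B‖ := (norm_add_le _ _).trans (by linarith)
  have htri : ‖z‖ ≤ ‖z - A‖ + ‖A‖ := norm_le_norm_sub_add z A
  nlinarith [norm_nonneg (z - A), norm_nonneg A, norm_nonneg B]

theorem NumberField.finite_backwardOrbit_sq_sub {L : Type*} [Field L] [NumberField L] (A B a : L) :
    (backwardOrbit (fun z => (z - A) ^ 2 - B) a).Finite := by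
  classical
  have : Algebra.IsAlgebraic ℤ L :=
    ⟨fun x => (IsFractionRing.isAlgebraic_iff ℤ ℚ L).mpr (.of_finite ℚ x)⟩
  obtain ⟨d, hd, hint⟩ := Algebra.IsAlgebraic.exists_integral_multiples ℤ ({A, B, a} : Finset L)
  set M : ℝ := ∑ φ : L →+* ℂ, (2 * ‖φ A‖ + 2 * ‖φ B‖ + ‖φ a‖) + 2
  have hM (φ : L →+* ℂ) : 2 * ‖φ A‖ + 2 * ‖φ B‖ + ‖φ a‖ + 2 ≤ M := by
    have := Finset.single_le_sum (f := fun φ : L →+* ℂ => 2 * ‖φ A‖ + 2 * ‖φ B‖ + ‖φ a‖)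
      (fun _ _ => by positivity) (Finset.mem_univ φ)
    linarith
  set P : Set L := {x | IsIntegral ℤ (d • x) ∧ ∀ φ : L →+* ℂ, ‖φ x‖ ≤ M}
  have hPfin : P.Finite := by
    refine ((Embeddings.finite_of_norm_le L ℂ (‖(d : ℂ)‖ * M)).image
      fun y => (d : L)⁻¹ * y).subset fun x ⟨hxint, hxbd⟩ => ⟨d • x, ⟨hxint, fun φ => ?_⟩, ?_⟩
    · rw [zsmul_eq_mul, map_mul, map_intCast, norm_mul]
      exact mul_le_mul_of_nonneg_left (hxbd φ) (norm_nonneg _)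
    · simp [zsmul_eq_mul, hd]
  refine hPfin.subset (backwardOrbit_subset ⟨hint a (by simp), fun φ => ?_⟩ ?_)
  · linarith [hM φ, norm_nonneg (φ A), norm_nonneg (φ B)]
  rintro x ⟨hxint, hxbd⟩
  refine ⟨isIntegral_smul_of_sq_sub (hint A (by simp)) (hint B (by simp)) hxint, fun φ => ?_⟩
  refine norm_le_of_norm_sq_sub_le (A := φ A) (B := φ B) (by linarith [hM φ, norm_nonneg (φ a)]) ?_
  simpa only [map_sub, map_pow] using hxbd φ

theorem NumberField.finite_backwardOrbit_sq_sub_of_subset_range {L F : Type*} [Field L]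
    [NumberField L] [Field F] (ι : L →+* F) (A B a : L)
    (hsub : backwardOrbit (fun z => (z - ι A) ^ 2 - ι B) (ι a) ⊆ range ι) :
    (backwardOrbit (fun z => (z - ι A) ^ 2 - ι B) (ι a)).Finite := by
  have hsemiconj : Semiconj ι (fun z => (z - A) ^ 2 - B) (fun z => (z - ι A) ^ 2 - ι B) :=
    fun z => by simp only [map_sub, map_pow]
  rw [← image_preimage_eq_of_subset hsub, preimage_backwardOrbit ι.injective hsemiconj]
  exact (finite_backwardOrbit_sq_sub A B a).image ι

theorem Polynomial.aeval_iterate_comp_X {R S : Type*} [CommSemiring R] [CommSemiring S]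
    [Algebra R S] (f : R[X]) (n : ℕ) (x : S) :
    aeval x ((fun p => p.comp f)^[n] X) = (fun z => aeval z f)^[n] x := by
  induction n generalizing x with
  | zero => simp
  | succ n ih => rw [iterate_succ_apply', aeval_comp, ih, iterate_succ_apply]

/-- Over a number field `K`, if `f = (X-a)^2 - b` is post-critically infinite
then, for any `α` in a fixed algebraic closure, the compositum over `K(α)` of the splitting
fields of the `f^n(X) - α` is an infinite extension of `K(α)`. -/
theorem stmt_7 (K : Type*) [Field K] [NumberField K] (a b : K)
    (f : K[X]) (hf : f = (X - C a) ^ 2 - C b)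
    (hpci : Set.Infinite {x : K | ∃ n : ℕ, 1 ≤ n ∧ (fun x => f.eval x)^[n] a = x})
    (α : AlgebraicClosure K) :
    ¬ FiniteDimensional
      (IntermediateField.adjoin K ({α} : Set (AlgebraicClosure K)))
      (IntermediateField.adjoin
        (↥(IntermediateField.adjoin K ({α} : Set (AlgebraicClosure K))))
        {x : AlgebraicClosure K | ∃ n : ℕ, 1 ≤ n ∧
          Polynomial.aeval x ((fun p => p.comp f)^[n] X) = α}) := by
  intro hfin
  set E := IntermediateField.adjoin K ({α} : Set (AlgebraicClosure K))
  set Φ : AlgebraicClosure K → AlgebraicClosure K :=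
    fun z => (z - algebraMap K _ a) ^ 2 - algebraMap K _ b
  have hS : {x : AlgebraicClosure K | ∃ n : ℕ, 1 ≤ n ∧
      Polynomial.aeval x ((fun p => p.comp f)^[n] X) = α} = backwardOrbit Φ α := by
    have hΦ : (fun z => aeval z f) = Φ := by funext z; simp [hf, Φ]
    simp only [aeval_iterate_comp_X, hΦ]
    rfl
  rw [hS] at hfin
  set L := IntermediateField.adjoin E (backwardOrbit Φ α)
  have : FiniteDimensional K E := IntermediateField.adjoin.finiteDimensional
    (Algebra.IsIntegral.isIntegral α)
  have : FiniteDimensional ℚ E := Module.Finite.trans K E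
  have : FiniteDimensional ℚ L := Module.Finite.trans E L
  have : NumberField L := ⟨⟩
  have hfinite : (backwardOrbit Φ α).Finite :=
    NumberField.finite_backwardOrbit_sq_sub_of_subset_range (algebraMap L (AlgebraicClosure K))
      (algebraMap K L a) (algebraMap K L b)
      (algebraMap E L ⟨α, IntermediateField.mem_adjoin_simple_self K α⟩)
      fun x hx => ⟨⟨x, IntermediateField.subset_adjoin _ _ hx⟩, rfl⟩
  have hab : b = -a := by
    have := eq_neg_of_backwardOrbit_sq_sub_finite hfinite
    exact (algebraMap K (AlgebraicClosure K)).injective (by simpa using this)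
  have hfix : f.eval a = a := by simp [hf, hab]
  exact hpci ((finite_singleton a).subset fun _ ⟨n, _, hn⟩ => hn ▸ iterate_fixed hfix n)
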